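/- arXiv:1311.1423 — 4 statements merged into one kernel-verified Lean document; each statement's English description precedes it below -/
import Mathlib

section
/- Let c be the forgetful single-history channel with delay function δ and initial value 0, regarded as a map from signals to signals. The following are equivalent: (1) c is not a constant-delay channel, i.e., there is no d > 0 such that c(s)(t) = 0 for t < d and c(s)(t) = s(t − d) for t ≥ d for all signals s; (2) there exists a pulse s such that c(s) is the constant-zero signal; (3) γ > 0, where γ := inf{Δ > 0 : Δ − δ∞ + δ(Δ − δ∞) > 0}. -/
open scoped Classical

/-- A (binary, continuous-time) signal: it attains its new value at each transition time
(right-local constancy) and changes value only finitely often in every bounded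
interval. -/
def IsSignal (s : ℝ → Bool) : Prop :=
  (∀ t : ℝ, ∃ ε > 0, ∀ u : ℝ, t ≤ u → u < t + ε → s u = s t) ∧
  (∀ a b : ℝ, {t : ℝ | a ≤ t ∧ t ≤ b ∧
      ∀ ε > 0, ∃ u : ℝ, t - ε < u ∧ u < t ∧ s u ≠ s t}.Finite)

/-- `t` is a transition time of `s`: arbitrarily shortly before `t` the value differs. -/
def Transition (s : ℝ → Bool) (t : ℝ) : Prop :=
  ∀ ε > 0, ∃ u : ℝ, t - ε < u ∧ u < t ∧ s u ≠ s t

/-- Extension of `s` to negative times by the channel's initial value `x`; its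
transitions on `[0,∞)` form exactly the channel's input event list (with the extra
event at time `0` prepended when the initial value of `s` differs from `x`). -/
noncomputable def extendInit (x : Bool) (s : ℝ → Bool) : ℝ → Bool := fun t => if t < 0 then x else s t

/-- `ev` enumerates, in strictly increasing order and without repetitions or omissions,
the input event list of the signal `s` for a channel with initial value `x`
(`none` marks the end of a finite event list). -/
def EnumeratesEvents (x : Bool) (s : ℝ → Bool) (ev : ℕ → Option (ℝ × Bool)) : Prop :=
  (∀ n, ev n = none → ev (n + 1) = none) ∧
  (∀ n e e', ev n = some e → ev (n + 1) = some e' → e.1 < e'.1) ∧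
  (∀ n t b, ev n = some (t, b) → Transition (extendInit x s) t ∧ extendInit x s t = b) ∧
  (∀ t : ℝ, Transition (extendInit x s) t → ∃ n, ev n = some (t, extendInit x s t))

/-- The value of the last event of an output list (stored in reverse order, the most
recent event first); the implicit initial event is `(−∞, x)`. -/
def lastVal (x : Bool) : List (ℝ × Bool) → Bool
  | [] => x
  | e :: _ => e.2

/-- One iteration of the forgetful single-history channel algorithm. -/
noncomputable def fstep (δ : ℝ → ℝ) (dinfty : ℝ) (x : Bool)
    (S : List (ℝ × Bool)) (e : ℝ × Bool) : List (ℝ × Bool) :=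
  if e.2 = lastVal x S then S
  else
    match S with
    | [] => [(e.1 + dinfty, e.2)]
    | (t', b) :: rest =>
        if t' < e.1 + δ (e.1 - t') then (e.1 + δ (e.1 - t'), e.2) :: (t', b) :: rest
        else rest

/-- The output list after `n` iterations of the forgetful algorithm on a finite or
infinite input event list. -/
noncomputable def fstatesO (δ : ℝ → ℝ) (dinfty : ℝ) (x : Bool)
    (ev : ℕ → Option (ℝ × Bool)) : ℕ → List (ℝ × Bool)
  | 0 => []
  | n + 1 =>
      match ev n with
      | none => fstatesO δ dinfty x ev n
      | some e => fstep δ dinfty x (fstatesO δ dinfty x ev n) e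

/-- The events of the limiting output list: those that eventually stay in `S_n`. -/
noncomputable def limitEvents (δ : ℝ → ℝ) (dinfty : ℝ) (x : Bool)
    (ev : ℕ → Option (ℝ × Bool)) : Set (ℝ × Bool) :=
  {e | ∃ N, ∀ n, N ≤ n → e ∈ fstatesO δ dinfty x ev n}

/-- `out` is the signal described by the event set `E` together with the initial event
`(−∞, x)`: at every time its value is the value of the latest event not after it. -/
def SignalOfEvents (x : Bool) (E : Set (ℝ × Bool)) (out : ℝ → Bool) : Prop :=
  ∀ t : ℝ,
    (∃ e ∈ E, e.1 ≤ t ∧ out t = e.2 ∧ ∀ e' ∈ E, e'.1 ≤ t → e'.1 ≤ e.1) ∨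
    ((∀ e ∈ E, t < e.1) ∧ out t = x)

/-- The input/output relation of the forgetful single-history channel with delay
function `δ`, limit delay `dinfty = δ∞` and initial value `x`. -/
def ForgetfulChannel (δ : ℝ → ℝ) (dinfty : ℝ) (x : Bool) (s out : ℝ → Bool) : Prop :=
  ∃ ev : ℕ → Option (ℝ × Bool), EnumeratesEvents x s ev ∧
    SignalOfEvents x (limitEvents δ dinfty x ev) out

/-- The constant-delay channel with delay `d` and initial value `x`. -/
noncomputable def delayChannel (d : ℝ) (x : Bool) (s : ℝ → Bool) : ℝ → Bool :=
  fun t => if t < d then x else s (t - d)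

/-- The pulse of length `Δ` at time `T`: the signal that is `1` exactly on `[T, T+Δ)`. -/
noncomputable def Pulse (T Δ : ℝ) : ℝ → Bool := fun t => decide (T ≤ t ∧ t < T + Δ)

/-! ### Auxiliary lemmas -/

section Aux

/-- Right-local constancy. -/
def RLC (g : ℝ → Bool) : Prop := ∀ t : ℝ, ∃ ε > 0, ∀ u : ℝ, t ≤ u → u < t + ε → g u = g t

lemma rlc_extend {s : ℝ → Bool} (h : RLC s) (x : Bool) : RLC (extendInit x s) := by
  intro t
  rcases lt_or_ge t 0 with ht | ht
  · refine ⟨-t, by linarith, fun u hu1 hu2 => ?_⟩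
    simp [extendInit, ht, show u < 0 by linarith]
  · obtain ⟨ε, hε, hconst⟩ := h t
    refine ⟨ε, hε, fun u hu1 hu2 => ?_⟩
    have hu0 : ¬ u < 0 := by linarith
    simp [extendInit, hu0, not_lt.mpr ht, hconst u hu1 hu2]

lemma const_of_no_trans {g : ℝ → Bool} (hg : RLC g) {a b : ℝ} (hab : a ≤ b)
    (h : ∀ t, a < t → t ≤ b → ¬ Transition g t) : g b = g a := by
  set A : Set ℝ := {u | a ≤ u ∧ u ≤ b ∧ ∀ v, a ≤ v → v ≤ u → g v = g a} with hA
  have haA : a ∈ A := ⟨le_refl a, hab, fun v hv1 hv2 => by rw [le_antisymm hv2 hv1]⟩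
  have hbdd : BddAbove A := ⟨b, fun u hu => hu.2.1⟩
  set c := sSup A with hc
  have hac : a ≤ c := le_csSup hbdd haA
  have hcb : c ≤ b := csSup_le ⟨a, haA⟩ fun u hu => hu.2.1
  have step1 : ∀ v, a ≤ v → v < c → g v = g a := by
    intro v hv1 hv2
    obtain ⟨u, huA, hvu⟩ := exists_lt_of_lt_csSup ⟨a, haA⟩ hv2
    exact huA.2.2 v hv1 hvu.le
  have step2 : g c = g a := by
    by_contra hne
    have hac' : a < c := lt_of_le_of_ne hac (fun h' => hne (by rw [← h']))
    refine h c hac' hcb ?_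
    intro ε hε
    refine ⟨max a (c - ε/2), ?_, ?_, ?_⟩
    · have : c - ε < c - ε/2 := by linarith
      exact lt_of_lt_of_le this (le_max_right _ _)
    · exact max_lt hac' (by linarith)
    · rw [step1 _ (le_max_left _ _) (max_lt hac' (by linarith))]
      exact fun h' => hne h'.symm
  have step3 : ∀ v, a ≤ v → v ≤ c → g v = g a := by
    intro v hv1 hv2
    rcases lt_or_eq_of_le hv2 with h' | h'
    · exact step1 v hv1 h'
    · rw [h']; exact step2
  have step4 : c = b := by
    by_contra hne
    have hcb' : c < b := lt_of_le_of_ne hcb hne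
    obtain ⟨ε, hε, hconst⟩ := hg c
    have hcc' : c < min b (c + ε/2) := lt_min hcb' (by linarith)
    have hc'A : min b (c + ε/2) ∈ A := by
      refine ⟨le_trans hac hcc'.le, min_le_left _ _, ?_⟩
      intro v hv1 hv2
      rcases le_or_gt v c with hvc | hvc
      · exact step3 v hv1 hvc
      · have hvε : v < c + ε := by
          have : v ≤ c + ε/2 := le_trans hv2 (min_le_right _ _)
          linarith
        rw [hconst v hvc.le hvε, step2]
    exact absurd (le_csSup hbdd hc'A) (not_le.mpr hcc')
  rw [← step4]; exact step2

lemma ev_none_ge {ev : ℕ → Option (ℝ × Bool)} (h1 : ∀ n, ev n = none → ev (n + 1) = none)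
    {m : ℕ} (hm : ev m = none) : ∀ n, m ≤ n → ev n = none := by
  intro n hn
  induction n with
  | zero => cases Nat.le_zero.mp hn; exact hm
  | succ k ih =>
    rcases Nat.lt_or_ge m (k + 1) with h | h
    · exact h1 k (ih (Nat.lt_succ_iff.mp h))
    · have : m = k + 1 := le_antisymm hn h
      rw [← this]; exact hm

lemma ev_some_le {ev : ℕ → Option (ℝ × Bool)} (h1 : ∀ n, ev n = none → ev (n + 1) = none)
    {n : ℕ} {e : ℝ × Bool} (hn : ev n = some e) {m : ℕ} (hm : m ≤ n) :
    ∃ e', ev m = some e' := by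
  cases hEm : ev m with
  | none => rw [ev_none_ge h1 hEm n hm] at hn; cases hn
  | some e' => exact ⟨e', rfl⟩

lemma ev_strict {ev : ℕ → Option (ℝ × Bool)} (h1 : ∀ n, ev n = none → ev (n + 1) = none)
    (h2 : ∀ n e e', ev n = some e → ev (n + 1) = some e' → e.1 < e'.1)
    {m n : ℕ} {e e' : ℝ × Bool} (hmn : m < n) (hm : ev m = some e) (hn : ev n = some e') :
    e.1 < e'.1 := by
  induction n generalizing e' with
  | zero => omega
  | succ k ih =>
    have hk : ∃ e'', ev k = some e'' := by
      cases hK : ev k with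
      | none => rw [h1 k hK] at hn; cases hn
      | some e'' => exact ⟨e'', rfl⟩
    obtain ⟨e'', hk⟩ := hk
    rcases Nat.lt_or_ge m k with h | h
    · exact lt_trans (ih h hk) (h2 k e'' e' hk hn)
    · have hmk : m = k := by omega
      subst hmk
      exact h2 m e e' hm hn

lemma ev_no_trans_between {x : Bool} {s : ℝ → Bool} {ev : ℕ → Option (ℝ × Bool)}
    (hev : EnumeratesEvents x s ev) {n : ℕ} {t t' : ℝ} {b b' : Bool}
    (hn : ev n = some (t, b)) (hn1 : ev (n + 1) = some (t', b'))
    {u : ℝ} (h1 : t < u) (h2 : u < t') : ¬ Transition (extendInit x s) u := by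
  intro hu
  obtain ⟨m, hm⟩ := hev.2.2.2 u hu
  rcases lt_trichotomy m n with h | h | h
  · have := ev_strict hev.1 hev.2.1 h hm hn
    simp only at this; linarith
  · rw [h, hn] at hm
    simp only [Option.some.injEq, Prod.mk.injEq] at hm
    linarith [hm.1]
  · have h' : n + 1 ≤ m := h
    rcases lt_or_eq_of_le h' with h'' | h''
    · have := ev_strict hev.1 hev.2.1 h'' hn1 hm
      simp only at this; linarith
    · rw [← h'', hn1] at hm
      simp only [Option.some.injEq, Prod.mk.injEq] at hm
      linarith [hm.1]

lemma ev_no_trans_before {x : Bool} {s : ℝ → Bool} {ev : ℕ → Option (ℝ × Bool)}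
    (hev : EnumeratesEvents x s ev) {t : ℝ} {b : Bool}
    (h0 : ev 0 = some (t, b)) {u : ℝ} (hu : u < t) : ¬ Transition (extendInit x s) u := by
  intro h
  obtain ⟨m, hm⟩ := hev.2.2.2 u h
  rcases Nat.eq_zero_or_pos m with h' | h'
  · rw [h', h0] at hm
    simp only [Option.some.injEq, Prod.mk.injEq] at hm
    linarith [hm.1]
  · have := ev_strict hev.1 hev.2.1 h' h0 hm
    simp only at this; linarith

lemma ev_no_trans_empty {x : Bool} {s : ℝ → Bool} {ev : ℕ → Option (ℝ × Bool)}
    (hev : EnumeratesEvents x s ev) (h0 : ev 0 = none) {u : ℝ} :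
    ¬ Transition (extendInit x s) u := by
  intro h
  obtain ⟨m, hm⟩ := hev.2.2.2 u h
  rw [ev_none_ge hev.1 h0 m (Nat.zero_le m)] at hm
  cases hm

lemma extend_neg {x : Bool} {s : ℝ → Bool} {u : ℝ} (hu : u < 0) : extendInit x s u = x := by
  simp [extendInit, hu]

lemma no_trans_neg {x : Bool} {s : ℝ → Bool} {u : ℝ} (hu : u < 0) :
    ¬ Transition (extendInit x s) u := by
  intro h
  obtain ⟨w, hw1, hw2, hw3⟩ := h (-u) (by linarith)
  exact hw3 (by rw [extend_neg (lt_trans hw2 hu), extend_neg hu])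

lemma eq_x_of_no_trans {x : Bool} {s : ℝ → Bool} (hrlc : RLC (extendInit x s)) {τ : ℝ}
    (h : ∀ u, u ≤ τ → ¬ Transition (extendInit x s) u) : extendInit x s τ = x := by
  have ha : min τ (-1) < 0 := lt_of_le_of_lt (min_le_right _ _) (by norm_num)
  have h2 := const_of_no_trans hrlc (min_le_left τ (-1)) (fun t ht1 ht2 => h t ht2)
  rw [h2, extend_neg ha]

end Aux

section StepLemmas

variable {δ : ℝ → ℝ} {d : ℝ} {x : Bool} {ev : ℕ → Option (ℝ × Bool)}

lemma fstatesO_zero : fstatesO δ d x ev 0 = [] := rfl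

lemma fstatesO_succ (n : ℕ) : fstatesO δ d x ev (n + 1) =
    match ev n with
    | none => fstatesO δ d x ev n
    | some e => fstep δ d x (fstatesO δ d x ev n) e := rfl

lemma fstatesO_succ_none {n : ℕ} (h : ev n = none) :
    fstatesO δ d x ev (n + 1) = fstatesO δ d x ev n := by
  rw [fstatesO_succ, h]

lemma fstatesO_succ_some {n : ℕ} {e : ℝ × Bool} (h : ev n = some e) :
    fstatesO δ d x ev (n + 1) = fstep δ d x (fstatesO δ d x ev n) e := by
  rw [fstatesO_succ, h]

lemma fstep_nil {t : ℝ} {b : Bool} (h : ¬ b = x) :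
    fstep δ d x [] (t, b) = [(t + d, b)] := by
  simp [fstep, lastVal, h]

lemma fstep_cons {t' : ℝ} {b' : Bool} {rest : List (ℝ × Bool)} {t : ℝ} {b : Bool}
    (h : ¬ b = b') :
    fstep δ d x ((t', b') :: rest) (t, b) =
      if t' < t + δ (t - t') then (t + δ (t - t'), b) :: (t', b') :: rest else rest := by
  simp [fstep, lastVal, h]

end StepLemmas

section Aux2

lemma channel_const {δ : ℝ → ℝ} {dinfty : ℝ}
    (hconst : ∀ y : ℝ, -dinfty < y → δ y = dinfty)
    (s out : ℝ → Bool) (hs : RLC s)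
    (hch : ForgetfulChannel δ dinfty false s out) :
    out = delayChannel dinfty false s := by
  obtain ⟨ev, hev, hsig⟩ := hch
  have hrlc : RLC (extendInit false s) := rlc_extend hs false
  have hQ : ∀ n e, ev n = some e →
      fstatesO δ dinfty false ev (n + 1) = (e.1 + dinfty, e.2) :: fstatesO δ dinfty false ev n := by
    intro n
    induction n with
    | zero =>
      rintro ⟨t, b⟩ h0
      obtain ⟨htr, hval⟩ := hev.2.2.1 0 t b h0
      have htrue : b = true := by
        obtain ⟨u, hu1, hu2, hu3⟩ := htr 1 one_pos
        have hu4 : extendInit false s u = false := by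
          apply eq_x_of_no_trans hrlc
          intro w hw
          exact ev_no_trans_before hev h0 (lt_of_le_of_lt hw hu2)
        rw [hu4, hval] at hu3
        exact (Bool.not_eq_false b).mp (Ne.symm hu3)
      subst htrue
      rw [fstatesO_succ_some h0, fstatesO_zero, fstep_nil (by simp)]
    | succ k ih =>
      rintro ⟨t, b⟩ hn
      obtain ⟨⟨t', b'⟩, hk⟩ := ev_some_le hev.1 hn (Nat.le_succ k)
      have hS := ih (t', b') hk
      have htt' : t' < t := ev_strict hev.1 hev.2.1 (Nat.lt_succ_self k) hk hn
      obtain ⟨htr, hval⟩ := hev.2.2.1 (k + 1) t b hn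
      obtain ⟨htr', hval'⟩ := hev.2.2.1 k t' b' hk
      have hbb' : ¬ (b = b') := by
        obtain ⟨u, hu1, hu2, hu3⟩ := htr (t - t') (by linarith)
        have huc : extendInit false s u = extendInit false s t' := by
          apply const_of_no_trans hrlc (by linarith : t' ≤ u)
          intro w hw1 hw2
          exact ev_no_trans_between hev hk hn hw1 (lt_of_le_of_lt hw2 hu2)
        rw [huc, hval, hval'] at hu3
        exact fun h => hu3 (h ▸ rfl)
      have hδ : δ (t - (t' + dinfty)) = dinfty := hconst _ (by linarith)
      rw [fstatesO_succ_some hn, hS, fstep_cons hbb', hδ,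
        if_pos (by linarith : t' + dinfty < t + dinfty), ← hS]
  have hmonoS : ∀ m n, m ≤ n → ∀ e, e ∈ fstatesO δ dinfty false ev m →
      e ∈ fstatesO δ dinfty false ev n := by
    intro m n hmn
    induction n with
    | zero =>
      have : m = 0 := Nat.le_zero.mp hmn
      rw [this]; exact fun e he => he
    | succ k ih =>
      intro e he
      rcases Nat.lt_or_ge m (k + 1) with h | h
      · have he' := ih (Nat.lt_succ_iff.mp h) e he
        cases hK : ev k with
        | none => rw [fstatesO_succ_none hK]; exact he'
        | some e' => rw [hQ k e' hK]; exact List.mem_cons_of_mem _ he'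
      · have : m = k + 1 := le_antisymm hmn h
        rw [← this]; exact he
  have hOrig : ∀ n e, e ∈ fstatesO δ dinfty false ev n →
      ∃ m t b, ev m = some (t, b) ∧ e = (t + dinfty, b) := by
    intro n
    induction n with
    | zero => intro e he; cases he
    | succ k ih =>
      intro e he
      cases hK : ev k with
      | none =>
        rw [fstatesO_succ_none hK] at he
        exact ih e he
      | some e' =>
        rw [hQ k e' hK] at he
        rcases List.mem_cons.mp he with h | h
        · exact ⟨k, e'.1, e'.2, by rw [← hK], h⟩
        · exact ih e h
  have hE1 : ∀ m t b, ev m = some (t, b) → (t + dinfty, b) ∈ limitEvents δ dinfty false ev := by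
    intro m t b hm
    refine ⟨m + 1, fun n hn => hmonoS (m + 1) n hn _ ?_⟩
    rw [hQ m (t, b) hm]
    exact List.mem_cons_self
  have hE2 : ∀ e ∈ limitEvents δ dinfty false ev, ∃ m t b, ev m = some (t, b) ∧ e = (t + dinfty, b) := by
    rintro e ⟨N, hN⟩
    exact hOrig N e (hN N le_rfl)
  funext t
  have key : out t = extendInit false s (t - dinfty) := by
    rcases hsig t with ⟨e, heE, hle, hout, hmax⟩ | ⟨hall, hout⟩
    · obtain ⟨m, u, b, hm, he⟩ := hE2 e heE
      obtain ⟨hutr, huval⟩ := hev.2.2.1 m u b hm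
      have huτ : u ≤ t - dinfty := by
        rw [he] at hle
        simp only at hle
        linarith
      have hcc : extendInit false s (t - dinfty) = extendInit false s u := by
        apply const_of_no_trans hrlc huτ
        intro w hw1 hw2 hwtr
        obtain ⟨mw, hmw⟩ := hev.2.2.2 w hwtr
        have hwE := hE1 mw w _ hmw
        have := hmax _ hwE (by simp only; linarith)
        rw [he] at this
        simp only at this
        linarith
      rw [hout, he, hcc, huval]
    · rw [hout]
      symm
      apply eq_x_of_no_trans hrlc
      intro w hw hwtr
      obtain ⟨mw, hmw⟩ := hev.2.2.2 w hwtr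
      have := hall _ (hE1 mw w _ hmw)
      simp only at this
      linarith
  rw [key]
  unfold delayChannel
  rcases lt_or_ge t dinfty with h | h
  · rw [if_pos h, extend_neg (by linarith : t - dinfty < 0)]
  · rw [if_neg (not_lt.mpr h)]
    simp [extendInit, not_lt.mpr (by linarith : (0:ℝ) ≤ t - dinfty)]

end Aux2

section Aux3

lemma pulse_lt {T Δ t : ℝ} (h : t < T) : Pulse T Δ t = false := by
  simp only [Pulse, decide_eq_false_iff_not]
  exact fun h' => absurd h'.1 (not_le.mpr h)

lemma pulse_mid {T Δ t : ℝ} (h1 : T ≤ t) (h2 : t < T + Δ) : Pulse T Δ t = true := by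
  simp [Pulse, h1, h2]

lemma pulse_ge {T Δ t : ℝ} (h : T + Δ ≤ t) : Pulse T Δ t = false := by
  simp only [Pulse, decide_eq_false_iff_not]
  exact fun h' => absurd h'.2 (not_lt.mpr h)

lemma pulse_extend {T Δ : ℝ} (hT : 0 ≤ T) : extendInit false (Pulse T Δ) = Pulse T Δ := by
  funext t
  unfold extendInit
  split_ifs with h
  · exact (pulse_lt (lt_of_lt_of_le h hT)).symm
  · rfl

lemma pulse_rlc {T Δ : ℝ} (hΔ : 0 < Δ) : RLC (Pulse T Δ) := by
  intro t
  rcases lt_or_ge t T with h | h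
  · exact ⟨T - t, by linarith, fun u h1 h2 => by rw [pulse_lt (by linarith), pulse_lt h]⟩
  · rcases lt_or_ge t (T + Δ) with h' | h'
    · exact ⟨T + Δ - t, by linarith, fun u h1 h2 => by
        rw [pulse_mid (le_trans h h1) (by linarith), pulse_mid h h']⟩
    · exact ⟨1, one_pos, fun u h1 h2 => by rw [pulse_ge (le_trans h' h1), pulse_ge h']⟩

lemma pulse_trans_T {T Δ : ℝ} (hΔ : 0 < Δ) : Transition (Pulse T Δ) T := by
  intro ε hε
  refine ⟨T - ε/2, by linarith, by linarith, ?_⟩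
  rw [pulse_lt (by linarith : T - ε/2 < T), pulse_mid le_rfl (by linarith)]
  simp

lemma pulse_trans_TΔ {T Δ : ℝ} (hΔ : 0 < Δ) : Transition (Pulse T Δ) (T + Δ) := by
  intro ε hε
  have hm1 : 0 < min ε Δ := lt_min hε hΔ
  have hm2 : min ε Δ ≤ ε := min_le_left _ _
  have hm3 : min ε Δ ≤ Δ := min_le_right _ _
  refine ⟨T + Δ - min ε Δ / 2, by linarith, by linarith, ?_⟩
  rw [pulse_mid (by linarith) (by linarith), pulse_ge le_rfl]
  simp

lemma pulse_not_trans {T Δ : ℝ} (hΔ : 0 < Δ) {t : ℝ} (h1 : t ≠ T) (h2 : t ≠ T + Δ) :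
    ¬ Transition (Pulse T Δ) t := by
  intro htr
  rcases lt_trichotomy t T with h | h | h
  · obtain ⟨u, hu1, hu2, hu3⟩ := htr 1 one_pos
    exact hu3 (by rw [pulse_lt (lt_trans hu2 h), pulse_lt h])
  · exact h1 h
  · rcases lt_trichotomy t (T + Δ) with h' | h' | h'
    · obtain ⟨u, hu1, hu2, hu3⟩ := htr (t - T) (by linarith)
      exact hu3 (by rw [pulse_mid (by linarith) (by linarith), pulse_mid h.le h'])
    · exact h2 h'
    · obtain ⟨u, hu1, hu2, hu3⟩ := htr (t - (T + Δ)) (by linarith)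
      exact hu3 (by rw [pulse_ge (by linarith), pulse_ge h'.le])

lemma isSignal_pulse {T Δ : ℝ} (hΔ : 0 < Δ) : IsSignal (Pulse T Δ) := by
  constructor
  · exact pulse_rlc hΔ
  · intro a b
    apply Set.Finite.subset ((Set.finite_singleton (T + Δ)).insert T)
    intro t ht
    obtain ⟨h1, h2, h3⟩ := ht
    by_contra hc
    simp only [Set.mem_insert_iff, Set.mem_singleton_iff] at hc
    push_neg at hc
    exact pulse_not_trans hΔ hc.1 hc.2 h3

lemma pulse_trans_iff {T Δ : ℝ} (hT : 0 ≤ T) (hΔ : 0 < Δ) (t : ℝ) :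
    Transition (extendInit false (Pulse T Δ)) t ↔ (t = T ∨ t = T + Δ) := by
  rw [pulse_extend hT]
  constructor
  · intro h
    by_contra hc
    push_neg at hc
    exact pulse_not_trans hΔ hc.1 hc.2 h
  · rintro (rfl | rfl)
    · exact pulse_trans_T hΔ
    · exact pulse_trans_TΔ hΔ

lemma pulse_ev_forced {T Δ : ℝ} (hT : 0 ≤ T) (hΔ : 0 < Δ) {ev : ℕ → Option (ℝ × Bool)}
    (hev : EnumeratesEvents false (Pulse T Δ) ev) :
    ev 0 = some (T, true) ∧ ev 1 = some (T + Δ, false) ∧ ∀ n, 2 ≤ n → ev n = none := by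
  have hext := pulse_extend (Δ := Δ) hT
  have hTΔ : T < T + Δ := by linarith
  have hvT : extendInit false (Pulse T Δ) T = true := by
    rw [hext]; exact pulse_mid le_rfl hTΔ
  have hvTΔ : extendInit false (Pulse T Δ) (T + Δ) = false := by
    rw [hext]; exact pulse_ge le_rfl
  obtain ⟨n0, hn0⟩ := hev.2.2.2 T ((pulse_trans_iff hT hΔ T).mpr (Or.inl rfl))
  obtain ⟨n1, hn1⟩ := hev.2.2.2 (T + Δ) ((pulse_trans_iff hT hΔ _).mpr (Or.inr rfl))
  rw [hvT] at hn0
  rw [hvTΔ] at hn1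
  obtain ⟨⟨t0, b0⟩, h0⟩ := ev_some_le hev.1 hn0 (Nat.zero_le n0)
  have ht0 : t0 = T := by
    obtain ⟨htr0, hval0⟩ := hev.2.2.1 0 t0 b0 h0
    rcases (pulse_trans_iff hT hΔ t0).mp htr0 with h' | h'
    · exact h'
    · exfalso
      rcases Nat.eq_zero_or_pos n0 with h'' | h''
      · rw [h'', h0] at hn0
        simp only [Option.some.injEq, Prod.mk.injEq] at hn0
        rw [h'] at hn0
        linarith [hn0.1]
      · have := ev_strict hev.1 hev.2.1 h'' h0 hn0
        simp only at this
        rw [h'] at this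
        linarith
  have hb0 : b0 = true := by
    obtain ⟨htr0, hval0⟩ := hev.2.2.1 0 t0 b0 h0
    rw [ht0, hvT] at hval0
    exact hval0.symm
  rw [ht0, hb0] at h0
  have hn1pos : 0 < n1 := by
    rcases Nat.eq_zero_or_pos n1 with h'' | h''
    · exfalso
      rw [h'', h0] at hn1
      simp only [Option.some.injEq, Prod.mk.injEq] at hn1
      linarith [hn1.1]
    · exact h''
  obtain ⟨⟨t1, b1⟩, h1⟩ := ev_some_le hev.1 hn1 hn1pos
  have ht1 : t1 = T + Δ := by
    obtain ⟨htr1, hval1⟩ := hev.2.2.1 1 t1 b1 h1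
    have hlt : T < t1 := by
      have := ev_strict hev.1 hev.2.1 (by norm_num : 0 < 1) h0 h1
      simpa using this
    rcases (pulse_trans_iff hT hΔ t1).mp htr1 with h' | h'
    · exfalso; rw [h'] at hlt; linarith
    · exact h'
  have hb1 : b1 = false := by
    obtain ⟨htr1, hval1⟩ := hev.2.2.1 1 t1 b1 h1
    rw [ht1, hvTΔ] at hval1
    exact hval1.symm
  rw [ht1, hb1] at h1
  refine ⟨h0, h1, ?_⟩
  have h2 : ev 2 = none := by
    cases h2' : ev 2 with
    | none => rfl
    | some e2 =>
      exfalso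
      obtain ⟨t2, b2⟩ := e2
      obtain ⟨htr2, hval2⟩ := hev.2.2.1 2 t2 b2 h2'
      have hlt : T + Δ < t2 := by
        have := ev_strict hev.1 hev.2.1 (by norm_num : 1 < 2) h1 h2'
        simpa using this
      rcases (pulse_trans_iff hT hΔ t2).mp htr2 with h' | h' <;> rw [h'] at hlt <;> linarith
  intro n hn
  exact ev_none_ge hev.1 h2 n hn

lemma pulse_fstates {δ : ℝ → ℝ} {dinfty T Δ : ℝ} {ev : ℕ → Option (ℝ × Bool)}
    (h0 : ev 0 = some (T, true)) (h1 : ev 1 = some (T + Δ, false))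
    (h2 : ∀ n, 2 ≤ n → ev n = none) :
    ∀ n, 2 ≤ n → fstatesO δ dinfty false ev n =
      if T + dinfty < T + Δ + δ (T + Δ - (T + dinfty))
      then [(T + Δ + δ (T + Δ - (T + dinfty)), false), (T + dinfty, true)] else [] := by
  have hs1 : fstatesO δ dinfty false ev 1 = [(T + dinfty, true)] := by
    rw [fstatesO_succ_some h0, fstatesO_zero, fstep_nil (by simp)]
  have hs2 : fstatesO δ dinfty false ev 2 =
      if T + dinfty < T + Δ + δ (T + Δ - (T + dinfty))
      then [(T + Δ + δ (T + Δ - (T + dinfty)), false), (T + dinfty, true)] else [] := by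
    rw [fstatesO_succ_some h1, hs1, fstep_cons (by simp)]
  intro n hn
  induction n with
  | zero => omega
  | succ k ih =>
    rcases Nat.lt_or_ge k 2 with h | h
    · have : k = 1 := by omega
      subst this
      exact hs2
    · rw [fstatesO_succ_none (h2 k h)]
      exact ih h

lemma limit_eventually {δ : ℝ → ℝ} {dinfty : ℝ} {x : Bool} {ev : ℕ → Option (ℝ × Bool)}
    {L : List (ℝ × Bool)} {N : ℕ}
    (h : ∀ n, N ≤ n → fstatesO δ dinfty x ev n = L) :
    limitEvents δ dinfty x ev = {e | e ∈ L} := by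
  ext e
  constructor
  · rintro ⟨M, hM⟩
    have := hM (max M N) (le_max_left _ _)
    rwa [h _ (le_max_right _ _)] at this
  · intro he
    exact ⟨N, fun n hn => by rw [h n hn]; exact he⟩

noncomputable def pulseEv (T Δ : ℝ) : ℕ → Option (ℝ × Bool)
  | 0 => some (T, true)
  | 1 => some (T + Δ, false)
  | _ + 2 => none

lemma pulseEv_enum {T Δ : ℝ} (hT : 0 ≤ T) (hΔ : 0 < Δ) :
    EnumeratesEvents false (Pulse T Δ) (pulseEv T Δ) := by
  have hext := pulse_extend (Δ := Δ) hT
  have hTΔ : T < T + Δ := by linarith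
  refine ⟨?_, ?_, ?_, ?_⟩
  · intro n hn
    match n with
    | 0 => simp [pulseEv] at hn
    | 1 => simp [pulseEv] at hn
    | (n + 2) => rfl
  · intro n e e' h h'
    match n with
    | 0 =>
      injection h with h
      injection h' with h'
      rw [← h, ← h']
      simpa using hTΔ
    | 1 => simp [pulseEv] at h'
    | (n + 2) => simp [pulseEv] at h
  · intro n t b h
    match n with
    | 0 =>
      injection h with h
      injection h with ht hb
      rw [← ht, ← hb]
      exact ⟨(pulse_trans_iff hT hΔ T).mpr (Or.inl rfl), by rw [hext]; exact pulse_mid le_rfl hTΔ⟩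
    | 1 =>
      injection h with h
      injection h with ht hb
      rw [← ht, ← hb]
      exact ⟨(pulse_trans_iff hT hΔ _).mpr (Or.inr rfl), by rw [hext]; exact pulse_ge le_rfl⟩
    | (n + 2) => simp [pulseEv] at h
  · intro t htr
    rcases (pulse_trans_iff hT hΔ t).mp htr with h | h
    · refine ⟨0, ?_⟩
      rw [h, hext, pulse_mid le_rfl hTΔ]
      rfl
    · refine ⟨1, ?_⟩
      rw [h, hext, pulse_ge le_rfl]
      rfl

lemma signal_empty (x : Bool) : SignalOfEvents x ∅ (fun _ => x) :=
  fun _ => Or.inr ⟨fun e he => absurd he (Set.notMem_empty e), rfl⟩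

end Aux3

section Aux4

open Filter in
lemma pset_nonempty {δ : ℝ → ℝ} {dinfty : ℝ}
    (hlim : Filter.Tendsto δ Filter.atTop (nhds dinfty)) (hpos : 0 < dinfty) :
    ∃ Δ : ℝ, 0 < Δ ∧ 0 < Δ - dinfty + δ (Δ - dinfty) := by
  have h1 : ∀ᶠ x : ℝ in atTop, dinfty / 2 < δ x :=
    hlim.eventually (eventually_gt_nhds (by linarith))
  have h2 : ∀ᶠ x : ℝ in atTop, (1:ℝ) ≤ x := eventually_ge_atTop 1
  obtain ⟨x, hx1, hx2⟩ := (h1.and h2).exists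
  refine ⟨dinfty + x, by linarith, ?_⟩
  have hxx : dinfty + x - dinfty = x := by ring
  rw [hxx]
  linarith

lemma gamma_pos {δ : ℝ → ℝ} {dinfty : ℝ} (hmono : Monotone δ) {Δ : ℝ} (hΔ : 0 < Δ)
    (hf : Δ - dinfty + δ (Δ - dinfty) ≤ 0)
    (hne : ∃ Δ' : ℝ, 0 < Δ' ∧ 0 < Δ' - dinfty + δ (Δ' - dinfty)) :
    0 < sInf {Δ' : ℝ | 0 < Δ' ∧ 0 < Δ' - dinfty + δ (Δ' - dinfty)} := by
  have hlb : ∀ Δ' ∈ {Δ' : ℝ | 0 < Δ' ∧ 0 < Δ' - dinfty + δ (Δ' - dinfty)}, Δ ≤ Δ' := by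
    rintro Δ' ⟨hp1, hp2⟩
    by_contra hcon
    push_neg at hcon
    have := hmono (show Δ' - dinfty ≤ Δ - dinfty by linarith)
    linarith
  exact lt_of_lt_of_le hΔ (le_csInf hne hlb)

lemma delta_const {δ : ℝ → ℝ} {dinfty : ℝ} (hmono : Monotone δ)
    (hlim : Filter.Tendsto δ Filter.atTop (nhds dinfty))
    (h : ∀ Δ : ℝ, 0 < Δ → 0 < Δ - dinfty + δ (Δ - dinfty)) :
    ∀ y : ℝ, -dinfty < y → δ y = dinfty := by
  intro y hy
  have hub : δ y ≤ dinfty := hmono.ge_of_tendsto hlim y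
  rcases le_or_gt dinfty (δ y) with h' | h'
  · exact le_antisymm hub h'
  · exfalso
    have hz1 : -dinfty < min y (-δ y) := lt_min hy (by linarith)
    have hz2 : 0 < min y (-δ y) + dinfty := by linarith
    have h3 := h (min y (-δ y) + dinfty) hz2
    have hz3 : min y (-δ y) + dinfty - dinfty = min y (-δ y) := by ring
    rw [hz3] at h3
    have h4 : δ (min y (-δ y)) ≤ δ y := hmono (min_le_left _ _)
    have h5 : min y (-δ y) ≤ -δ y := min_le_right _ _
    linarith

end Aux4

/-- for the forgetful single-history channel `c` with delay function `δ`
and initial value `0`, the following are equivalent: (1) `c` is not a constant-delay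
channel; (2) some pulse is mapped by `c` to the constant-zero signal; (3) `γ > 0`,
where `γ = inf {Δ > 0 | Δ − δ∞ + δ(Δ − δ∞) > 0}`. -/
theorem forgetful_nonconstant_tfae (δ : ℝ → ℝ) (dinfty : ℝ)
    (hmono : Monotone δ)
    (hlim : Filter.Tendsto δ Filter.atTop (nhds dinfty))
    (hpos : 0 < dinfty) :
    (¬ (∃ d : ℝ, 0 < d ∧ ∀ s out : ℝ → Bool, IsSignal s →
          ForgetfulChannel δ dinfty false s out → out = delayChannel d false s) ↔
      (∃ T Δ : ℝ, 0 ≤ T ∧ 0 < Δ ∧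
          ForgetfulChannel δ dinfty false (Pulse T Δ) fun _ => false)) ∧
    ((∃ T Δ : ℝ, 0 ≤ T ∧ 0 < Δ ∧
          ForgetfulChannel δ dinfty false (Pulse T Δ) fun _ => false) ↔
      0 < sInf {Δ : ℝ | 0 < Δ ∧ 0 < Δ - dinfty + δ (Δ - dinfty)}) := by
  have hPne : ∃ Δ' : ℝ, 0 < Δ' ∧ 0 < Δ' - dinfty + δ (Δ' - dinfty) := pset_nonempty hlim hpos
  have iff2 : (∃ T Δ : ℝ, 0 ≤ T ∧ 0 < Δ ∧
      ForgetfulChannel δ dinfty false (Pulse T Δ) fun _ => false) ↔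
      0 < sInf {Δ : ℝ | 0 < Δ ∧ 0 < Δ - dinfty + δ (Δ - dinfty)} := by
    constructor
    · rintro ⟨T, Δ, hT, hΔ, ev, hev, hsig⟩
      refine gamma_pos hmono hΔ ?_ hPne
      by_contra hf
      push_neg at hf
      obtain ⟨h0, h1, h2⟩ := pulse_ev_forced hT hΔ hev
      have hst := pulse_fstates (δ := δ) (dinfty := dinfty) h0 h1 h2
      have harg : T + Δ - (T + dinfty) = Δ - dinfty := by ring
      have hcond : T + dinfty < T + Δ + δ (T + Δ - (T + dinfty)) := by
        rw [harg]; linarith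
      have hL : ∀ n, 2 ≤ n → fstatesO δ dinfty false ev n =
          [(T + Δ + δ (Δ - dinfty), false), (T + dinfty, true)] := by
        intro n hn
        rw [hst n hn, if_pos hcond, harg]
      have hE := limit_eventually hL
      rcases hsig (T + dinfty) with ⟨e, heE, hle, hout, hmax⟩ | ⟨hall, _⟩
      · rw [hE] at heE
        simp only [Set.mem_setOf_eq, List.mem_cons, List.mem_singleton,
          List.not_mem_nil, or_false] at heE
        rcases heE with rfl | rfl
        · simp only at hle
          linarith
        · simp only at hout
          exact Bool.noConfusion hout
      · have := hall (T + dinfty, true) (by rw [hE]; simp)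
        simp only at this
        linarith
    · intro hγ
      refine ⟨0, sInf {Δ : ℝ | 0 < Δ ∧ 0 < Δ - dinfty + δ (Δ - dinfty)} / 2, le_rfl,
        half_pos hγ, ?_⟩
      set Δ := sInf {Δ : ℝ | 0 < Δ ∧ 0 < Δ - dinfty + δ (Δ - dinfty)} / 2 with hΔdef
      have hΔpos : 0 < Δ := half_pos hγ
      have hf : Δ - dinfty + δ (Δ - dinfty) ≤ 0 := by
        by_contra h
        push_neg at h
        have hmem : Δ ∈ {Δ : ℝ | 0 < Δ ∧ 0 < Δ - dinfty + δ (Δ - dinfty)} := ⟨hΔpos, h⟩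
        have := csInf_le ⟨0, fun x hx => hx.1.le⟩ hmem
        rw [hΔdef] at this
        linarith [hγ]
      refine ⟨pulseEv 0 Δ, pulseEv_enum le_rfl hΔpos, ?_⟩
      have h0 : pulseEv 0 Δ 0 = some (0, true) := rfl
      have h1 : pulseEv 0 Δ 1 = some (0 + Δ, false) := rfl
      have h2 : ∀ n, 2 ≤ n → pulseEv 0 Δ n = none := by
        intro n hn
        match n with
        | (k + 2) => rfl
      have hst := pulse_fstates (δ := δ) (dinfty := dinfty) h0 h1 h2
      have harg : 0 + Δ - (0 + dinfty) = Δ - dinfty := by ring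
      have hcond : ¬ ((0:ℝ) + dinfty < 0 + Δ + δ (0 + Δ - (0 + dinfty))) := by
        rw [harg]
        intro hcon
        linarith
      have hL : ∀ n, 2 ≤ n → fstatesO δ dinfty false (pulseEv 0 Δ) n = [] := by
        intro n hn
        rw [hst n hn, if_neg hcond]
      rw [limit_eventually hL]
      have hemp : {e : ℝ × Bool | e ∈ ([] : List (ℝ × Bool))} = ∅ := by simp
      rw [hemp]
      exact signal_empty false
  refine ⟨⟨?_, ?_⟩, iff2⟩
  · intro hnc
    by_contra hnp
    apply hnc
    refine ⟨dinfty, hpos, ?_⟩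
    have hγ : ¬ 0 < sInf {Δ : ℝ | 0 < Δ ∧ 0 < Δ - dinfty + δ (Δ - dinfty)} :=
      fun h => hnp (iff2.mpr h)
    have hall : ∀ Δ : ℝ, 0 < Δ → 0 < Δ - dinfty + δ (Δ - dinfty) := by
      intro Δ hΔ
      by_contra h
      push_neg at h
      exact hγ (gamma_pos hmono hΔ h hPne)
    have hconst := delta_const hmono hlim hall
    intro s out hsg hch
    exact channel_const hconst s out hsg.1 hch
  · rintro ⟨T, Δ, hT, hΔ, hch⟩ ⟨d, hd, hdall⟩
    have heq := hdall (Pulse T Δ) (fun _ => false) (isSignal_pulse hΔ) hch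
    have heq' := congrFun heq (T + d)
    rw [delayChannel] at heq'
    rw [if_neg (by intro hcon; linarith : ¬ T + d < d)] at heq'
    have hTd : T + d - d = T := by ring
    rw [hTd, pulse_mid le_rfl (by linarith)] at heq'
    exact Bool.noConfusion heq'
end

section
/- Let δ be a delay function such that δinf is finite, δ(t) = δ∞ for all t ≥ −δinf, and the left limit δ⁻ := lim_{u→0+} δ(−δinf − u) satisfies δ⁻ < δ∞. Apply the non-forgetful single-history channel algorithm with delay function δ and initial value 0 to the input event list consisting of the two events (S,1) and (S + x, 0) with S ≥ 0 and x > 0. Then either the final output list consists only of the initial event (−∞,0), or it consists of (−∞,0) followed by exactly two events (a,1), (b,0) with a = S + δ∞ and b = S + x + δ(x − δ∞), and in the latter case the output pulse length b − a satisfies b − a < max(0, δ⁻ − δinf) or b − a ≥ δ∞ − δinf. -/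
open scoped Classical

/-- One iteration of the non-forgetful single-history channel algorithm with delay
function `δ`, limit delay `dinfty = δ∞`, and initial value `x`, processing input event
`e`.  The state is the output list (in reverse order; the initial event `(−∞, x)` is
implicit) together with the most recent potential output time `r` (`none` = `−∞`). -/
noncomputable def nstep (δ : ℝ → ℝ) (dinfty : ℝ) (x : Bool) :
    List (ℝ × Bool) × Option ℝ → ℝ × Bool → List (ℝ × Bool) × Option ℝ
  | (S, r), e =>
    if e.2 = lastVal x S then (S, r)
    else
      match r with
      | none => ((e.1 + dinfty, e.2) :: S, some (e.1 + dinfty))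
      | some rp =>
          if rp < e.1 + δ (e.1 - rp) then
            ((e.1 + δ (e.1 - rp), e.2) :: S, some (e.1 + δ (e.1 - rp)))
          else (S.tail, some (e.1 + δ (e.1 - rp)))

/-- forbidden output pulse lengths of a non-forgetful single-history
channel of Case 2.2.  Assume `δinf` (the right limit of `δ` at `−δ∞`) is finite,
`δ(t) = δ∞` for all `t ≥ −δinf`, and the left limit `δ⁻` of `δ` at `−δinf` satisfies
`δ⁻ < δ∞`.  Running the algorithm with initial value `0` on the input pulse events
`(S,1), (S+x,0)` (with `S ≥ 0`, `x > 0`) yields either only the initial event `(−∞,0)`,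
or exactly the two events `(a,1), (b,0)` with `a = S + δ∞` and `b = S + x + δ(x − δ∞)`,
in which case the output pulse length satisfies `b − a < max 0 (δ⁻ − δinf)` or
`b − a ≥ δ∞ − δinf`. -/
theorem nonforgetful_forbidden_pulse_lengths (δ : ℝ → ℝ) (dinfty : ℝ)
    (hmono : Monotone δ)
    (hlim : Filter.Tendsto δ Filter.atTop (nhds dinfty))
    (hpos : 0 < dinfty)
    (dinf : ℝ)
    (hdinf : Filter.Tendsto (fun u : ℝ => δ (-dinfty + u))
      (nhdsWithin 0 (Set.Ioi 0)) (nhds dinf))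
    (hflat : ∀ t : ℝ, -dinf ≤ t → δ t = dinfty)
    (dminus : ℝ)
    (hdminus : Filter.Tendsto (fun u : ℝ => δ (-dinf - u))
      (nhdsWithin 0 (Set.Ioi 0)) (nhds dminus))
    (hlt : dminus < dinfty)
    (S x : ℝ) (hS : 0 ≤ S) (hx : 0 < x) :
    (nstep δ dinfty false (nstep δ dinfty false ([], none) (S, true)) (S + x, false)).1
        = [] ∨
    ((nstep δ dinfty false (nstep δ dinfty false ([], none) (S, true)) (S + x, false)).1
        = [(S + x + δ (x - dinfty), false), (S + dinfty, true)] ∧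
      ((S + x + δ (x - dinfty)) - (S + dinfty) < max 0 (dminus - dinf) ∨
        dinfty - dinf ≤ (S + x + δ (x - dinfty)) - (S + dinfty))) := by
  have key : ∀ t : ℝ, t < -dinf → δ t ≤ dminus := by
    intro t ht
    have h0 : (0:ℝ) < -dinf - t := by linarith
    have hev : ∀ᶠ u in nhdsWithin (0:ℝ) (Set.Ioi 0), δ t ≤ δ (-dinf - u) := by
      filter_upwards [Ioo_mem_nhdsGT_of_mem ⟨le_refl (0:ℝ), h0⟩] with u hu
      exact hmono (by linarith [hu.2] : t ≤ -dinf - u)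
    exact ge_of_tendsto hdminus hev
  have e1 : nstep δ dinfty false ([], none) (S, true)
      = ([(S + dinfty, true)], some (S + dinfty)) := by
    simp [nstep, lastVal]
  rw [e1]
  have harg : S + x - (S + dinfty) = x - dinfty := by ring
  by_cases hcond : S + dinfty < S + x + δ (S + x - (S + dinfty))
  · right
    constructor
    · rw [harg] at hcond
      simp [nstep, lastVal, hcond]
    · rw [harg] at hcond
      by_cases hcase : -dinf ≤ x - dinfty
      · right
        rw [hflat _ hcase]
        linarith
      · left
        push_neg at hcase
        have h1 := key _ hcase
        have hmax := le_max_right (0:ℝ) (dminus - dinf)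
        linarith
  · left
    rw [harg] at hcond
    simp [nstep, lastVal, hcond]
end

section
/- Let α ∈ ℝ, let N be a positive integer, and let 0 < Δ ≤ 1. If D_N(α) / N < Δ / 2, then N Δ-covers, i.e., for every t ∈ ℝ there exist an integer k with 0 ≤ k ≤ N and an integer m such that t − Δ < αk + m ≤ t. -/
open scoped Classical

/-- `A(x,y;N)`: the number of `1 ≤ n ≤ N` whose fractional part of `αn` lies in `(x,y]`. -/
noncomputable def fracCount (α : ℝ) (N : ℕ) (x y : ℝ) : ℕ :=
  ((Finset.Icc 1 N).filter fun n => x < Int.fract (α * n) ∧ Int.fract (α * n) ≤ y).card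

/-- The discrepancy `D_N(α)`. -/
noncomputable def disc (α : ℝ) (N : ℕ) : ℝ :=
  sSup {d : ℝ | ∃ x y : ℝ, 0 ≤ x ∧ x < y ∧ y ≤ 1 ∧
    d = |(fracCount α N x y : ℝ) - (y - x) * N|}

/-- `K` Δ-covers (for shift α): for every real `t` there are an integer `0 ≤ k ≤ K`
and an integer `m` with `t − Δ < αk + m ≤ t`. -/
def Covers (α Δ : ℝ) (K : ℕ) : Prop :=
  ∀ t : ℝ, ∃ k : ℕ, k ≤ K ∧ ∃ m : ℤ, t - Δ < α * k + m ∧ α * k + m ≤ t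

lemma fracCount_le (α : ℝ) (N : ℕ) (x y : ℝ) : fracCount α N x y ≤ N := by
  unfold fracCount
  refine le_trans (Finset.card_filter_le _ _) ?_
  simp only [bind_pure_comp, Finset.fmap_def]
  refine le_trans Finset.card_image_le ?_
  simp

lemma abs_le_disc (α : ℝ) (N : ℕ) {x y : ℝ} (hx : 0 ≤ x) (hxy : x < y) (hy : y ≤ 1) :
    |(fracCount α N x y : ℝ) - (y - x) * N| ≤ disc α N := by
  apply le_csSup
  · refine ⟨2 * N, ?_⟩
    rintro d ⟨a, b, ha, hab, hb, rfl⟩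
    have h1 : (fracCount α N a b : ℝ) ≤ N := by exact_mod_cast fracCount_le α N a b
    have h0 : (0:ℝ) ≤ (fracCount α N a b : ℝ) := Nat.cast_nonneg _
    have hNn : (0:ℝ) ≤ (N:ℝ) := Nat.cast_nonneg _
    rw [abs_le]
    constructor <;> nlinarith
  · exact ⟨x, y, hx, hxy, hy, rfl⟩

lemma exists_n (α : ℝ) (N : ℕ) (hN : 0 < N) (Δ : ℝ)
    (h : disc α N / N < Δ / 2) {x y : ℝ} (hx : 0 ≤ x) (hxy : x < y) (hy : y ≤ 1)
    (hlen : Δ / 2 ≤ y - x) :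
    ∃ n : ℕ, n ∈ Finset.Icc 1 N ∧ x < Int.fract (α * n) ∧ Int.fract (α * n) ≤ y := by
  have hNpos : (0:ℝ) < N := by exact_mod_cast hN
  have hd : disc α N < Δ / 2 * N := (div_lt_iff₀ hNpos).mp h
  have habs := abs_le.mp (abs_le_disc α N hx hxy hy)
  have hA : 0 < fracCount α N x y := by
    rcases Nat.eq_zero_or_pos (fracCount α N x y) with h0 | h0
    · exfalso
      rw [h0] at habs
      push_cast at habs
      nlinarith [habs.1, mul_le_mul_of_nonneg_right hlen hNpos.le]
    · exact h0
  rw [fracCount] at hA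
  obtain ⟨n, hn⟩ := Finset.card_pos.mp hA
  simp only [Finset.mem_filter, bind_pure_comp, Finset.fmap_def, Finset.mem_image] at hn
  obtain ⟨⟨a, ha, hae⟩, hp1, hp2⟩ := hn
  subst hae
  exact ⟨a, ha, hp1, hp2⟩

/-- if `D_N(α)/N < Δ/2` (with `0 < Δ ≤ 1`, `N ≥ 1`), then `N` Δ-covers. -/
theorem disc_lt_implies_covers (α : ℝ) (N : ℕ) (hN : 0 < N) (Δ : ℝ)
    (h1 : 0 < Δ) (h2 : Δ ≤ 1) (h : disc α N / N < Δ / 2) :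
    Covers α Δ N := by
  intro t
  set u := Int.fract t with hu
  have hu0 : 0 ≤ u := Int.fract_nonneg t
  have hu1 : u < 1 := Int.fract_lt_one t
  have ht : u + ⌊t⌋ = t := by rw [hu]; exact Int.fract_add_floor t
  by_cases hcase : Δ / 2 ≤ u
  · -- use interval (max 0 (u - Δ), u]
    have hx : (0:ℝ) ≤ max 0 (u - Δ) := le_max_left _ _
    have hxy : max 0 (u - Δ) < u := by
      rcases max_cases 0 (u - Δ) with ⟨h', _⟩ | ⟨h', _⟩ <;> rw [h'] <;> linarith
    have hlen : Δ / 2 ≤ u - max 0 (u - Δ) := by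
      rcases max_cases 0 (u - Δ) with ⟨h', _⟩ | ⟨h', _⟩ <;> rw [h'] <;> linarith
    obtain ⟨n, hn, hfr1, hfr2⟩ := exists_n α N hN Δ h hx hxy hu1.le hlen
    rw [Finset.mem_Icc] at hn
    refine ⟨n, hn.2, ⌊t⌋ - ⌊α * n⌋, ?_, ?_⟩
    · have : u - Δ ≤ max 0 (u - Δ) := le_max_right _ _
      have hfr : α * n - ⌊α * n⌋ = Int.fract (α * n) := rfl
      push_cast
      linarith
    · have hfr : α * n - ⌊α * n⌋ = Int.fract (α * n) := rfl
      push_cast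
      linarith
  · -- u < Δ/2, use interval (u + 1 - Δ, 1]
    push_neg at hcase
    have hx : (0:ℝ) ≤ u + 1 - Δ := by linarith
    have hxy : u + 1 - Δ < 1 := by linarith
    have hlen : Δ / 2 ≤ 1 - (u + 1 - Δ) := by linarith
    obtain ⟨n, hn, hfr1, hfr2⟩ := exists_n α N hN Δ h hx hxy le_rfl hlen
    rw [Finset.mem_Icc] at hn
    have hfrlt : Int.fract (α * n) < 1 := Int.fract_lt_one _
    refine ⟨n, hn.2, ⌊t⌋ - ⌊α * n⌋ - 1, ?_, ?_⟩
    · have hfr : α * n - ⌊α * n⌋ = Int.fract (α * n) := rfl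
      push_cast
      linarith
    · have hfr : α * n - ⌊α * n⌋ = Int.fract (α * n) := rfl
      push_cast
      linarith
end

section
/- Let α > 0 be irrational and suppose there exists C₁ > 0 such that D_N(α) ≤ C₁ · log N for all integers N ≥ 2. Then for every ε > 0 there exists C > 0 such that for all Δ with 0 < Δ ≤ 1, the least nonnegative integer K(Δ) that Δ-covers exists and satisfies K(Δ) ≤ C · Δ^{−1−ε}. -/
open scoped Classical

lemma fracCount_eq (α : ℝ) (N : ℕ) (x y : ℝ) :
    fracCount α N x y = ((Finset.Icc 1 N).filter
      fun n : ℕ => x < Int.fract (α * n) ∧ Int.fract (α * n) ≤ y).card := by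
  unfold fracCount
  rw [show (do let a ← Finset.Icc 1 N; pure ((a : ℕ) : ℝ))
      = Finset.image (fun m : ℕ => (m : ℝ)) (Finset.Icc 1 N) from by simp]
  rw [Finset.filter_image]
  rw [Finset.card_image_of_injective _ Nat.cast_injective]

lemma count_pos (α C₁ : ℝ) (hC₁ : 0 < C₁)
    (hD : ∀ N : ℕ, 2 ≤ N → disc α N ≤ C₁ * Real.log N)
    (N : ℕ) (hN : 2 ≤ N) (x y : ℝ) (hx : 0 ≤ x) (hxy : x < y) (hy : y ≤ 1)
    (hgap : C₁ * Real.log N < (y - x) * N) :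
    ∃ n : ℕ, 1 ≤ n ∧ n ≤ N ∧ x < Int.fract (α * n) ∧ Int.fract (α * n) ≤ y := by
  have hNc : (0:ℝ) ≤ N := Nat.cast_nonneg _
  have hbdd : BddAbove {d : ℝ | ∃ x y : ℝ, 0 ≤ x ∧ x < y ∧ y ≤ 1 ∧
      d = |(fracCount α N x y : ℝ) - (y - x) * N|} := by
    refine ⟨2 * N, ?_⟩
    rintro d ⟨a, b, ha, hab, hb, rfl⟩
    have hcle : fracCount α N a b ≤ N := by
      rw [fracCount_eq]
      have h := Finset.card_filter_le (Finset.Icc 1 N)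
        (fun n : ℕ => a < Int.fract (α * n) ∧ Int.fract (α * n) ≤ b)
      simp only [Nat.card_Icc, Nat.add_sub_cancel] at h
      exact h
    have h1 : (fracCount α N a b : ℝ) ≤ N := by exact_mod_cast hcle
    have h2 : 0 ≤ (b - a) * N := mul_nonneg (by linarith) hNc
    have h3 : (b - a) * N ≤ N := by nlinarith
    have h4 : (0:ℝ) ≤ fracCount α N a b := Nat.cast_nonneg _
    rw [abs_le]; constructor <;> linarith
  have hmem : |(fracCount α N x y : ℝ) - (y - x) * N| ∈ {d : ℝ | ∃ x y : ℝ, 0 ≤ x ∧ x < y ∧ y ≤ 1 ∧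
      d = |(fracCount α N x y : ℝ) - (y - x) * N|} := ⟨x, y, hx, hxy, hy, rfl⟩
  have habs : |(fracCount α N x y : ℝ) - (y - x) * N| ≤ disc α N := le_csSup hbdd hmem
  have h7 : (y - x) * N - (fracCount α N x y : ℝ) ≤ |(fracCount α N x y : ℝ) - (y - x) * N| := by
    rw [abs_sub_comm]; exact le_abs_self _
  have hpos : (0:ℝ) < fracCount α N x y := by
    have h6 := hD N hN
    linarith
  have hposn : 0 < fracCount α N x y := by exact_mod_cast hpos
  rw [fracCount_eq, Finset.card_pos] at hposn
  obtain ⟨n, hn⟩ := hposn.exists_mem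
  rw [Finset.mem_filter, Finset.mem_Icc] at hn
  exact ⟨n, hn.1.1, hn.1.2, hn.2.1, hn.2.2⟩

lemma covers_of (α Δ C₁ : ℝ) (hC₁ : 0 < C₁)
    (hD : ∀ N : ℕ, 2 ≤ N → disc α N ≤ C₁ * Real.log N)
    (hΔ : 0 < Δ) (hΔ1 : Δ ≤ 1) (N : ℕ) (hN : 2 ≤ N)
    (h : C₁ * Real.log N < (Δ / 2) * N) : Covers α Δ N := by
  intro t
  set t' := Int.fract t with ht'
  have ht0 : 0 ≤ t' := Int.fract_nonneg t
  have ht1 : t' < 1 := Int.fract_lt_one t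
  have hNpos : (0:ℝ) ≤ N := Nat.cast_nonneg _
  have htf : t' = t - ⌊t⌋ := rfl
  rcases le_or_gt (Δ / 2) t' with h1 | h1
  · have hx0 : 0 ≤ max (t' - Δ) 0 := le_max_right _ _
    have hxy : max (t' - Δ) 0 < t' := by
      rcases le_total (t' - Δ) 0 with hc | hc
      · rw [max_eq_right hc]; linarith
      · rw [max_eq_left hc]; linarith
    have hgap : Δ / 2 ≤ t' - max (t' - Δ) 0 := by
      rcases le_total (t' - Δ) 0 with hc | hc
      · rw [max_eq_right hc]; linarith
      · rw [max_eq_left hc]; linarith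
    have hlt : C₁ * Real.log N < (t' - max (t' - Δ) 0) * N := by
      have := mul_le_mul_of_nonneg_right hgap hNpos
      linarith
    obtain ⟨n, hn1, hnN, hfl, hfu⟩ := count_pos α C₁ hC₁ hD N hN _ t' hx0 hxy ht1.le hlt
    have hff : Int.fract (α * n) = α * n - ⌊α * n⌋ := rfl
    have hmax : t' - Δ ≤ max (t' - Δ) 0 := le_max_left _ _
    refine ⟨n, hnN, ⌊t⌋ - ⌊α * n⌋, ?_, ?_⟩
    · push_cast; linarith
    · push_cast; linarith
  · have hx0 : (0:ℝ) ≤ 1 - Δ + t' := by linarith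
    have hxy : 1 - Δ + t' < 1 := by linarith
    have hlt : C₁ * Real.log N < (1 - (1 - Δ + t')) * N := by
      have hgap : Δ / 2 ≤ 1 - (1 - Δ + t') := by linarith
      have := mul_le_mul_of_nonneg_right hgap hNpos
      linarith
    obtain ⟨n, hn1, hnN, hfl, hfu⟩ := count_pos α C₁ hC₁ hD N hN _ 1 hx0 hxy le_rfl hlt
    have hlt1 : Int.fract (α * n) < 1 := Int.fract_lt_one _
    have hff : Int.fract (α * n) = α * n - ⌊α * n⌋ := rfl
    refine ⟨n, hnN, ⌊t⌋ - ⌊α * n⌋ - 1, ?_, ?_⟩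
    · push_cast; linarith
    · push_cast; linarith

/-- if `α > 0` is irrational with logarithmic discrepancy bound
`D_N(α) ≤ C₁ log N` (N ≥ 2), then for every `ε > 0` there is `C > 0` such that for all
`0 < Δ ≤ 1` the least Δ-covering integer `K(Δ)` exists and satisfies
`K(Δ) ≤ C · Δ^{−1−ε}`. -/
theorem least_cover_bound (α : ℝ) (hα : 0 < α) (hirr : Irrational α)
    (C₁ : ℝ) (hC₁ : 0 < C₁)
    (hD : ∀ N : ℕ, 2 ≤ N → disc α N ≤ C₁ * Real.log N) :
    ∀ ε : ℝ, 0 < ε → ∃ C : ℝ, 0 < C ∧ ∀ Δ : ℝ, 0 < Δ → Δ ≤ 1 →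
      ∃ K : ℕ, Covers α Δ K ∧ (∀ K' : ℕ, Covers α Δ K' → K ≤ K') ∧
        (K : ℝ) ≤ C * Δ ^ (-1 - ε : ℝ) := by
  intro ε hε
  set s : ℝ := ε / (2 * (1 + ε)) with hs_def
  clear_value s
  have hs : 0 < s := by rw [hs_def]; positivity
  have hs2 : s ≤ 1 / 2 := by
    rw [hs_def, div_le_div_iff₀ (by positivity) (by norm_num)]
    nlinarith
  set w : ℝ := 4 * C₁ / s + 1 with hw_def
  clear_value w
  have hw1 : 1 < w := by
    have := div_pos (by linarith : (0:ℝ) < 4 * C₁) hs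
    rw [hw_def]; linarith
  set C₀ : ℝ := max 2 (w ^ 2 / 2) with hC₀_def
  clear_value C₀
  have hC₀2 : 2 ≤ C₀ := by rw [hC₀_def]; exact le_max_left _ _
  have hC₀w : w ^ 2 ≤ 2 * C₀ := by
    have h := le_max_right 2 (w ^ 2 / 2)
    rw [← hC₀_def] at h; linarith
  refine ⟨C₀ + 1, by linarith, fun Δ hΔ hΔ1 => ?_⟩
  set P : ℝ := Δ ^ (-1 - ε : ℝ) with hP_def
  clear_value P
  have hP1 : 1 ≤ P := by
    rw [hP_def]
    exact Real.one_le_rpow_of_pos_of_le_one_of_nonpos hΔ hΔ1 (by linarith)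
  set x₀ : ℝ := C₀ * P with hx₀_def
  clear_value x₀
  have hx2 : 2 ≤ x₀ := by nlinarith
  set N : ℕ := ⌈x₀⌉₊ with hN_def
  clear_value N
  have hxN : x₀ ≤ N := by rw [hN_def]; exact Nat.le_ceil _
  have hNx : (N : ℝ) ≤ x₀ + 1 := by
    rw [hN_def]; exact (Nat.ceil_lt_add_one (by linarith)).le
  have hN2 : 2 ≤ N := by exact_mod_cast le_trans hx2 hxN
  have hkey : C₁ * Real.log N < (Δ / 2) * N := by
    set Q : ℝ := Δ ^ (-(ε / 2) : ℝ) with hQ_def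
    clear_value Q
    have hQ1 : 1 ≤ Q := by
      rw [hQ_def]
      exact Real.one_le_rpow_of_pos_of_le_one_of_nonpos hΔ hΔ1 (by linarith)
    set S : ℝ := Real.sqrt (2 * C₀) with hS_def
    clear_value S
    have hS2 : S ^ 2 = 2 * C₀ := by rw [hS_def]; exact Real.sq_sqrt (by linarith)
    have hSw : w ≤ S := by
      rw [hS_def]
      have h := Real.sqrt_le_sqrt hC₀w
      rwa [Real.sqrt_sq (by linarith)] at h
    have hS1 : 1 ≤ S := le_trans hw1.le hSw
    -- P ^ s = Q
    have hPQ : P ^ s = Q := by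
      rw [hP_def, hQ_def, ← Real.rpow_mul hΔ.le]
      congr 1
      rw [hs_def]
      field_simp
      ring
    -- log N ≤ (2C₀)^s * Q / s
    have hA0 : (0:ℝ) < (2 * C₀) ^ s := Real.rpow_pos_of_pos (by linarith) s
    have hlogN : Real.log N ≤ (2 * C₀) ^ s * Q / s := by
      have hNpos : (0:ℝ) < N := by linarith
      have h2x : (0:ℝ) < 2 * x₀ := by linarith
      have hle : (N:ℝ) ≤ 2 * x₀ := by linarith
      have hl1 : Real.log N ≤ Real.log (2 * x₀) := Real.log_le_log hNpos hle
      have hl2 : Real.log ((2 * x₀) ^ s) = s * Real.log (2 * x₀) := Real.log_rpow h2x s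
      have hl3 : Real.log ((2 * x₀) ^ s) ≤ (2 * x₀) ^ s - 1 :=
        Real.log_le_sub_one_of_pos (Real.rpow_pos_of_pos h2x s)
      have hl4 : Real.log (2 * x₀) ≤ (2 * x₀) ^ s / s := by
        rw [le_div_iff₀ hs, mul_comm]
        rw [hl2] at hl3; linarith
      have hsplit : (2 * x₀) ^ s = (2 * C₀) ^ s * Q := by
        rw [hx₀_def, ← mul_assoc,
          Real.mul_rpow (by linarith : (0:ℝ) ≤ 2 * C₀) (by linarith : (0:ℝ) ≤ P), hPQ]
      rw [hsplit] at hl4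
      calc Real.log N ≤ Real.log (2 * x₀) := hl1
        _ ≤ (2 * C₀) ^ s * Q / s := hl4
    -- (2C₀)^s ≤ S
    have hAS : (2 * C₀) ^ s ≤ S := by
      have h1 : (2 * C₀ : ℝ) ^ s ≤ (2 * C₀) ^ (1/2 : ℝ) :=
        Real.rpow_le_rpow_of_exponent_le (by linarith) hs2
      have h2 : (2 * C₀ : ℝ) ^ (1/2 : ℝ) = S := by
        rw [hS_def, Real.sqrt_eq_rpow]
      linarith [h1.trans_eq h2]
    -- Δ * P = Q ^ 2
    have hΔP : Δ * P = Q ^ 2 := by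
      have h1 : Δ * P = Δ ^ (1 + (-1 - ε) : ℝ) := by
        rw [hP_def, Real.rpow_add hΔ, Real.rpow_one]
      have h2 : Q ^ 2 = Δ ^ (-(ε/2) + -(ε/2) : ℝ) := by
        rw [hQ_def, Real.rpow_add hΔ, sq]
      rw [h1, h2]
      congr 1
      ring
    -- main comparison
    have hQ0 : (0:ℝ) < Q := by linarith
    have hS0 : (0:ℝ) < S := by linarith
    have hSQw : w ≤ S * Q := by
      calc w ≤ S := hSw
        _ = S * 1 := (mul_one S).symm
        _ ≤ S * Q := mul_le_mul_of_nonneg_left hQ1 (by linarith)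
    have hmain : C₁ / s * (S * Q) < (S * Q) * (S * Q) / 4 := by
      have hc : 4 * (C₁ / s) + 1 ≤ S * Q := by
        have : w = 4 * (C₁ / s) + 1 := by rw [hw_def]; ring
        linarith
      have hu : (0:ℝ) < S * Q := mul_pos hS0 hQ0
      nlinarith [mul_le_mul_of_nonneg_right hc hu.le, hu]
    have hrhs : (S * Q) * (S * Q) / 4 = (Δ / 2) * x₀ := by
      have : (S * Q) * (S * Q) = S ^ 2 * Q ^ 2 := by ring
      rw [this, hS2, ← hΔP, hx₀_def]
      ring
    have hlhs : C₁ * Real.log N ≤ C₁ / s * (S * Q) := by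
      have h1 : C₁ * Real.log N ≤ C₁ * ((2 * C₀) ^ s * Q / s) :=
        mul_le_mul_of_nonneg_left hlogN hC₁.le
      have h2 : C₁ * ((2 * C₀) ^ s * Q / s) ≤ C₁ / s * (S * Q) := by
        calc C₁ * ((2 * C₀) ^ s * Q / s) = C₁ * ((2 * C₀) ^ s * Q) / s := by ring
          _ ≤ C₁ * (S * Q) / s := by gcongr
          _ = C₁ / s * (S * Q) := by ring
      linarith
    have hN' : (Δ / 2) * x₀ ≤ (Δ / 2) * N :=
      mul_le_mul_of_nonneg_left hxN (by linarith)
    calc C₁ * Real.log N ≤ C₁ / s * (S * Q) := hlhs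
      _ < (S * Q) * (S * Q) / 4 := hmain
      _ = (Δ / 2) * x₀ := hrhs
      _ ≤ (Δ / 2) * N := hN'
  have hcov : Covers α Δ N := covers_of α Δ C₁ hC₁ hD hΔ hΔ1 N hN2 hkey
  have hne : ∃ K, Covers α Δ K := ⟨N, hcov⟩
  refine ⟨Nat.find hne, Nat.find_spec hne, fun K' h => Nat.find_min' hne h, ?_⟩
  have hfind : (Nat.find hne : ℝ) ≤ N := by
    exact_mod_cast Nat.find_min' hne hcov
  calc (Nat.find hne : ℝ) ≤ N := hfind
    _ ≤ x₀ + 1 := hNx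
    _ ≤ C₀ * P + P := by linarith
    _ = (C₀ + 1) * P := by ring
end
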